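/- Every involutive anti-isometry ν of the Gaussian lattice L_z is conjugate under Isom(L_z) to exactly one of κ₁ and κ₃; that is, for every involutive anti-isometry ν there exists A ∈ Isom(L_z) with ν = A∘κ₁∘A⁻¹ or ν = A∘κ₃∘A⁻¹, and there is no A ∈ Isom(L_z) with κ₃ = A∘κ₁∘A⁻¹. In particular, L_z admits exactly two Isom(L_z)-conjugacy classes of involutive anti-isometries. -/

import Mathlib

/-- The imaginary unit `i` in the Gaussian integers `ℤ[i]`. -/
def gi : GaussianInt := Zsqrtd.sqrtd

/-- The underlying `ℤ[i]`-module of the Gaussian lattice `L_z`. -/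
abbrev Lz : Type := GaussianInt × GaussianInt

/-- The Hermitian form of `L_z`, given by the matrix `[[-2, 1-i], [1+i, -2]]`;
conjugate-linear in the first argument, linear in the second. -/
def hz (x y : Lz) : GaussianInt :=
  star x.1 * (-2) * y.1 + star x.1 * (1 - gi) * y.2 +
    star x.2 * (1 + gi) * y.1 + star x.2 * (-2) * y.2

/-- An isometry of `L_z`: a `ℤ[i]`-linear bijection preserving the form `hz`. -/
def IsIsomLz (A : Lz → Lz) : Prop :=
  Function.Bijective A ∧ (∀ x y : Lz, A (x + y) = A x + A y) ∧
    (∀ (c : GaussianInt) (x : Lz), A (c • x) = c • A x) ∧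
    ∀ x y : Lz, hz (A x) (A y) = hz x y

/-- An involutive anti-isometry of `L_z`: an additive bijection `ν` with
`ν (c • v) = c̄ • ν v`, `hz (ν x) (ν y) = conj (hz x y)` and `ν ∘ ν = id`. -/
def IsInvAntiIsomLz (ν : Lz → Lz) : Prop :=
  Function.Bijective ν ∧ (∀ x y : Lz, ν (x + y) = ν x + ν y) ∧
    (∀ (c : GaussianInt) (x : Lz), ν (c • x) = star c • ν x) ∧
    (∀ x y : Lz, hz (ν x) (ν y) = star (hz x y)) ∧
    ∀ x : Lz, ν (ν x) = x

/-- The anti-isometry `κ₁ : (x₁, x₂) ↦ (−x̄₂, −x̄₁)` of `L_z`. -/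
def kappa1 (x : Lz) : Lz := (-(star x.2), -(star x.1))

/-- The anti-isometry `κ₃ : (x₁, x₂) ↦ (i·x̄₁, −x̄₂)` of `L_z`. -/
def kappa3 (x : Lz) : Lz := (gi * star x.1, -(star x.2))

/-!
An anti-isometry `ν` is determined by the roots (vectors of norm `-2`) `ν (1,0)` and `ν (0,1)`,
and `L_z` has only 24 roots. Two vectors `u, w` with the Gram matrix of the standard basis are
the columns of an isometry: their determinant `δ` satisfies `2 δ̄ δ = det H = 2`. So `ν` is
conjugate to `κ₁` once some root `u` has `h(u, -ν u) = 1 - i` (take `w = -ν u`), and to `κ₃` once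
there are roots `u, w` with `h(u, w) = 1 - i`, `ν u = i u` and `ν w = -w`; a finite search finds
such roots for every `ν`. Conjugate anti-isometries fix equally many roots, and `κ₁` fixes two
roots while `κ₃` fixes four.
-/

lemma star_gi : star gi = -gi := by decide

lemma gi_mul_gi : gi * gi = -1 := by decide

lemma star_hz (x y : Lz) : star (hz x y) = hz y x := by
  simp only [hz, star_add, star_mul, star_star, star_sub, star_one, star_neg, star_ofNat, star_gi]
  ring

lemma hz_neg_neg (x y : Lz) : hz (-x) (-y) = hz x y := by
  simp only [hz, Prod.fst_neg, Prod.snd_neg, star_neg]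
  ring

lemma hz_self_eq_fst (v : Lz) :
    hz v v = -(star v.1 * v.1 + star (v.1 - (1 - gi) * v.2) * (v.1 - (1 - gi) * v.2)) := by
  simp only [hz, star_sub, star_mul, star_one, star_gi]
  linear_combination (-(star v.2 * v.2)) * gi_mul_gi

lemma hz_self_eq_snd (v : Lz) :
    hz v v = -(star v.2 * v.2 + star (v.2 - (1 + gi) * v.1) * (v.2 - (1 + gi) * v.1)) := by
  simp only [hz, star_sub, star_add, star_mul, star_one, star_gi]
  linear_combination (-(star v.1 * v.1)) * gi_mul_gi

lemma norm_le_two_of_add_eq_two {x y : GaussianInt} (h : star x * x + star y * y = 2) :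
    x.norm ≤ 2 := by
  have hnorm : x.norm + y.norm = 2 := Int.cast_injective (α := GaussianInt) <| by
    push_cast [Zsqrtd.norm_eq_mul_conj]
    linear_combination h
  linarith [GaussianInt.norm_nonneg y]

def unitBox : List GaussianInt :=
  [-1, 0, 1].flatMap fun a => [-1, 0, 1].map fun b => ⟨a, b⟩

lemma mem_unitBox_of_norm_le_two {x : GaussianInt} (h : x.norm ≤ 2) : x ∈ unitBox := by
  obtain ⟨a, b⟩ := x
  rw [Zsqrtd.norm_def] at h
  dsimp only at h
  have ha : -1 ≤ a ∧ a ≤ 1 := by constructor <;> nlinarith [sq_nonneg b]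
  have hb : -1 ≤ b ∧ b ≤ 1 := by constructor <;> nlinarith [sq_nonneg a]
  obtain ⟨ha₁, ha₂⟩ := ha
  obtain ⟨hb₁, hb₂⟩ := hb
  interval_cases a <;> interval_cases b <;> decide

def roots : List Lz := (unitBox ×ˢ unitBox).filter fun v => hz v v = -2

lemma mem_roots_iff {v : Lz} : v ∈ roots ↔ hz v v = -2 := by
  refine ⟨fun hv => by simpa [roots] using (List.mem_filter.1 hv).2, fun hv => ?_⟩
  have h₁ : star v.1 * v.1 + _ = 2 := neg_inj.1 ((hz_self_eq_fst v).symm.trans hv)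
  have h₂ : star v.2 * v.2 + _ = 2 := neg_inj.1 ((hz_self_eq_snd v).symm.trans hv)
  refine List.mem_filter.2 ⟨List.mem_product.2 ⟨?_, ?_⟩, by simpa using hv⟩
  · exact mem_unitBox_of_norm_le_two (norm_le_two_of_add_eq_two h₁)
  · exact mem_unitBox_of_norm_le_two (norm_le_two_of_add_eq_two h₂)

def ofColumns (u w x : Lz) : Lz := x.1 • u + x.2 • w

def columnDet (u w : Lz) : GaussianInt := u.1 * w.2 - w.1 * u.2

lemma hz_ofColumns (u w x y : Lz) :
    hz (ofColumns u w x) (ofColumns u w y) =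
      star x.1 * y.1 * hz u u + star x.1 * y.2 * hz u w +
        star x.2 * y.1 * hz w u + star x.2 * y.2 * hz w w := by
  simp only [hz, ofColumns, Prod.fst_add, Prod.snd_add, Prod.smul_fst, Prod.smul_snd,
    smul_eq_mul, star_add, star_mul]
  ring

lemma ofColumns_standard (x : Lz) : ofColumns (1, 0) (0, 1) x = x := by
  ext <;> simp [ofColumns]

lemma ofColumns_bijective {u w : Lz} (hdet : star (columnDet u w) * columnDet u w = 1) :
    Function.Bijective (ofColumns u w) := by
  rw [columnDet] at hdet
  rw [Function.bijective_iff_has_inverse]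
  refine ⟨fun x => star (columnDet u w) • (w.2 * x.1 - w.1 * x.2, u.1 * x.2 - u.2 * x.1),
    fun x => ?_, fun x => ?_⟩
  all_goals
    refine Prod.ext ?_ ?_
    all_goals simp only [ofColumns, columnDet, Prod.fst_add, Prod.snd_add, Prod.smul_fst,
      Prod.smul_snd, Prod.smul_mk, smul_eq_mul]
  · linear_combination x.1 * hdet
  · linear_combination x.2 * hdet
  · linear_combination x.1 * hdet
  · linear_combination x.2 * hdet

lemma hz_gram_det (u w : Lz) :
    hz u u * hz w w - hz u w * hz w u = 2 * (star (columnDet u w) * columnDet u w) := by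
  simp only [hz, columnDet, star_sub, star_mul]
  linear_combination
    ((star u.1 * star w.2 - star w.1 * star u.2) * (u.1 * w.2 - w.1 * u.2)) * gi_mul_gi

lemma star_columnDet_mul_self {u w : Lz} (huu : hz u u = -2) (huw : hz u w = 1 - gi)
    (hww : hz w w = -2) : star (columnDet u w) * columnDet u w = 1 := by
  have hgram := hz_gram_det u w
  rw [huu, huw, hww, ← star_hz, huw, star_sub, star_one, star_gi] at hgram
  refine mul_left_cancel₀ (show (2 : GaussianInt) ≠ 0 by decide) ?_
  linear_combination -hgram + gi_mul_gi

lemma isIsomLz_ofColumns {u w : Lz} (huu : hz u u = -2) (huw : hz u w = 1 - gi)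
    (hww : hz w w = -2) : IsIsomLz (ofColumns u w) := by
  refine ⟨ofColumns_bijective (star_columnDet_mul_self huu huw hww), fun x y => ?_, fun c x => ?_,
    fun x y => ?_⟩
  · simp only [ofColumns, Prod.fst_add, Prod.snd_add, add_smul]
    abel
  · simp only [ofColumns, Prod.smul_fst, Prod.smul_snd, smul_add, smul_eq_mul, mul_smul]
  · have hwu : hz w u = 1 + gi := by rw [← star_hz, huw]; decide
    conv_rhs => rw [← ofColumns_standard x, ← ofColumns_standard y]
    rw [hz_ofColumns, hz_ofColumns, huu, huw, hwu, hww]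
    rfl

lemma apply_eq_ofColumns_star {ν : Lz → Lz} (hadd : ∀ x y : Lz, ν (x + y) = ν x + ν y)
    (hsmul : ∀ (c : GaussianInt) (x : Lz), ν (c • x) = star c • ν x) (x : Lz) :
    ν x = ofColumns (ν (1, 0)) (ν (0, 1)) (star x) := by
  conv_lhs => rw [← ofColumns_standard x]
  rw [ofColumns, hadd, hsmul, hsmul]
  rfl

lemma comp_ofColumns_eq_comp_kappa1 {ν : Lz → Lz} (hadd : ∀ x y : Lz, ν (x + y) = ν x + ν y)
    (hsmul : ∀ (c : GaussianInt) (x : Lz), ν (c • x) = star c • ν x) {u w : Lz}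
    (hu : ν u = -w) (hw : ν w = -u) : ν ∘ ofColumns u w = ofColumns u w ∘ kappa1 := by
  funext x
  simp only [Function.comp_apply, ofColumns, hadd, hsmul, hu, hw, kappa1, smul_neg, neg_smul]
  abel

lemma comp_ofColumns_eq_comp_kappa3 {ν : Lz → Lz} (hadd : ∀ x y : Lz, ν (x + y) = ν x + ν y)
    (hsmul : ∀ (c : GaussianInt) (x : Lz), ν (c • x) = star c • ν x) {u w : Lz}
    (hu : ν u = gi • u) (hw : ν w = -w) : ν ∘ ofColumns u w = ofColumns u w ∘ kappa3 := by
  funext x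
  simp only [Function.comp_apply, ofColumns, hadd, hsmul, hu, hw, kappa3, smul_neg, neg_smul,
    smul_smul, mul_comm gi]

lemma exists_kappa1_or_kappa3_roots : ∀ m₁ ∈ roots, ∀ m₂ ∈ roots, hz m₁ m₂ = 1 + gi →
    ofColumns m₁ m₂ (star m₁) = (1, 0) → ofColumns m₁ m₂ (star m₂) = (0, 1) →
    (∃ u ∈ roots, hz u (-ofColumns m₁ m₂ (star u)) = 1 - gi) ∨
    ∃ u ∈ roots, ∃ w ∈ roots, hz u w = 1 - gi ∧
      ofColumns m₁ m₂ (star u) = gi • u ∧ ofColumns m₁ m₂ (star w) = -w := by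
  decide

theorem IsInvAntiIsomLz.exists_isIsomLz_conj {ν : Lz → Lz} (hν : IsInvAntiIsomLz ν) :
    ∃ A : Lz → Lz, IsIsomLz A ∧ (ν ∘ A = A ∘ kappa1 ∨ ν ∘ A = A ∘ kappa3) := by
  obtain ⟨-, hadd, hsmul, hherm, hinv⟩ := hν
  have hroot (x : Lz) (hx : hz x x = -2) : hz (ν x) (ν x) = -2 := by rw [hherm, hx]; decide
  have hrep := apply_eq_ofColumns_star hadd hsmul
  have hneg (x : Lz) : ν (-x) = -ν x := (AddMonoidHom.mk' ν hadd).map_neg x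
  rcases exists_kappa1_or_kappa3_roots _ (mem_roots_iff.2 (hroot (1, 0) (by decide)))
      _ (mem_roots_iff.2 (hroot (0, 1) (by decide))) (by rw [hherm]; decide)
      (by rw [← hrep, hinv]) (by rw [← hrep, hinv]) with
    ⟨u, hu, huw⟩ | ⟨u, hu, w, hw, huw, hνu, hνw⟩
  · rw [← hrep] at huw
    have hww : hz (-ν u) (-ν u) = -2 := by rw [hz_neg_neg, hroot u (mem_roots_iff.1 hu)]
    refine ⟨_, isIsomLz_ofColumns (mem_roots_iff.1 hu) huw hww, .inl ?_⟩
    exact comp_ofColumns_eq_comp_kappa1 hadd hsmul (neg_neg _).symm (by rw [hneg, hinv])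
  · rw [← hrep] at hνu hνw
    exact ⟨_, isIsomLz_ofColumns (mem_roots_iff.1 hu) huw (mem_roots_iff.1 hw),
      .inr (comp_ofColumns_eq_comp_kappa3 hadd hsmul hνu hνw)⟩

def fixedRoots (κ : Lz → Lz) : Finset Lz := roots.toFinset.filter fun v => κ v = v

lemma card_fixedRoots_le_of_comp_eq {κ κ' A : Lz → Lz} (hA : IsIsomLz A)
    (h : κ' ∘ A = A ∘ κ) : (fixedRoots κ').card ≤ (fixedRoots κ).card := by
  obtain ⟨⟨hinj, hsurj⟩, -, -, hA⟩ := hA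
  refine le_trans (Finset.card_le_card (t := (fixedRoots κ).image A) fun v hv => ?_)
    Finset.card_image_le
  simp only [fixedRoots, Finset.mem_filter, List.mem_toFinset, mem_roots_iff] at hv
  obtain ⟨x, rfl⟩ := hsurj v
  refine Finset.mem_image.2 ⟨x, ?_, rfl⟩
  simp only [fixedRoots, Finset.mem_filter, List.mem_toFinset, mem_roots_iff]
  exact ⟨(hA x x).symm.trans hv.1, hinj ((congrFun h x).symm.trans hv.2)⟩

/-- Every involutive anti-isometry `ν` of `L_z` is conjugate under
`Isom(L_z)` to exactly one of `κ₁` and `κ₃`: there is an isometry `A` with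
`ν ∘ A = A ∘ κ₁` or `ν ∘ A = A ∘ κ₃` (i.e. `ν = A ∘ κᵢ ∘ A⁻¹`), and no isometry `A`
satisfies `κ₃ ∘ A = A ∘ κ₁` (i.e. `κ₃ = A ∘ κ₁ ∘ A⁻¹`).  In particular `L_z` has
exactly two `Isom(L_z)`-conjugacy classes of involutive anti-isometries. -/
theorem stmt7 :
    (∀ ν : Lz → Lz, IsInvAntiIsomLz ν →
      ∃ A : Lz → Lz, IsIsomLz A ∧ (ν ∘ A = A ∘ kappa1 ∨ ν ∘ A = A ∘ kappa3)) ∧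
    ¬ ∃ A : Lz → Lz, IsIsomLz A ∧ kappa3 ∘ A = A ∘ kappa1 := by
  refine ⟨fun ν hν => hν.exists_isIsomLz_conj, fun ⟨A, hA, h⟩ => ?_⟩
  have hcard : (fixedRoots kappa1).card = 2 ∧ (fixedRoots kappa3).card = 4 := by decide
  have := card_fixedRoots_le_of_comp_eq hA h
  omega
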